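/- Let j ∈ ℤ³ with j ≠ 0 and j ≠ e_z, and let w ∈ ℂ³ with w ≠ 0, j·w = 0 (complex bilinear dot product), and e_z·w ≠ 0. Let v ∈ ℂ³ with |v| = 1, w·v = 0 and e_z·v = 0, and define μ := v − ((v·(e_z − j))/|e_z − j|²)·(e_z − j), where |e_z − j|² is the squared Euclidean norm of the integer vector e_z − j. Then μ ≠ 0. -/

import Mathlib

open Complex

/-- The bilinear dot product on ℂ³. -/
noncomputable def cdot (v w : Fin 3 → ℂ) : ℂ := ∑ i, v i * w i

lemma cdot_eq_dotProduct (v w : Fin 3 → ℂ) : cdot v w = v ⬝ᵥ w := rfl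

lemma eq_zero_of_eq_smul_of_dotProduct_eq_zero {K ι : Type*} [Field K] [Fintype ι]
    {u v w : ι → K} {c : K} (hv : v = c • u) (hwu : w ⬝ᵥ u ≠ 0) (hwv : w ⬝ᵥ v = 0) :
    v = 0 := by
  rw [hv, dotProduct_smul, smul_eq_mul, mul_eq_zero] at hwv
  rw [hv, hwv.resolve_right hwu, zero_smul]

lemma dotProduct_sub_eq_of_dotProduct_eq_zero {R ι : Type*} [CommRing R] [Fintype ι]
    {a b w : ι → R} (hbw : b ⬝ᵥ w = 0) : w ⬝ᵥ (a - b) = a ⬝ᵥ w := by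
  rw [dotProduct_sub, dotProduct_comm w a, dotProduct_comm w b, hbw, sub_zero]

theorem stmt_13_general (j : Fin 3 → ℤ)
    (w : Fin 3 → ℂ)
    (hjw : cdot (fun i => (j i : ℂ)) w = 0)
    (hezw : cdot ![0, 0, 1] w ≠ 0)
    (v : Fin 3 → ℂ) (hvnorm : ∑ i, ‖v i‖ ^ 2 = 1)
    (hwv : cdot w v = 0)
    (μ : Fin 3 → ℂ)
    (hμ : μ = v - (cdot v (![0, 0, 1] - fun i => (j i : ℂ))
        / ((∑ i, ((![0, 0, 1] i - j i : ℤ) : ℝ) ^ 2 : ℝ) : ℂ))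
      • (![0, 0, 1] - fun i => (j i : ℂ))) :
    μ ≠ 0 := by
  rintro rfl
  rw [cdot_eq_dotProduct] at hjw hezw hwv
  obtain ⟨c, hv⟩ : ∃ c : ℂ, v = c • (![0, 0, 1] - fun i => (j i : ℂ)) :=
    ⟨_, sub_eq_zero.mp hμ.symm⟩
  have hv0 : v = 0 := eq_zero_of_eq_smul_of_dotProduct_eq_zero hv
    (by rwa [dotProduct_sub_eq_of_dotProduct_eq_zero hjw]) hwv
  simp [hv0] at hvnorm

theorem stmt_13 (j : Fin 3 → ℤ) (hj0 : j ≠ 0) (hjez : j ≠ ![0, 0, 1])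
    (w : Fin 3 → ℂ) (hw0 : w ≠ 0)
    (hjw : cdot (fun i => (j i : ℂ)) w = 0)
    (hezw : cdot ![0, 0, 1] w ≠ 0)
    (v : Fin 3 → ℂ) (hvnorm : ∑ i, ‖v i‖ ^ 2 = 1)
    (hwv : cdot w v = 0) (hezv : cdot ![0, 0, 1] v = 0)
    (μ : Fin 3 → ℂ)
    (hμ : μ = v - (cdot v (![0, 0, 1] - fun i => (j i : ℂ))
        / ((∑ i, ((![0, 0, 1] i - j i : ℤ) : ℝ) ^ 2 : ℝ) : ℂ))
      • (![0, 0, 1] - fun i => (j i : ℂ))) :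
    μ ≠ 0 :=
  stmt_13_general j w hjw hezw v hvnorm hwv μ hμ
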